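/- arXiv:2604.02673 — 2 statements merged into one kernel-verified Lean document; each statement's English description precedes it below -/
import Mathlib

section
/- In SSL, ¬S_aφ → K_a¬S_aφ is derivable for every agent a and formula φ. -/
/-- Formulas of the epistemic-secrecy language: atoms, ⊤, ¬, ∧, K_a, S_a
(→, ↔, ⊥ are defined by abbreviation). -/
inductive Form (A P : Type) : Type where
  | atom : P → Form A P
  | top : Form A P
  | neg : Form A P → Form A P
  | and : Form A P → Form A P → Form A P
  | K : A → Form A P → Form A P
  | S : A → Form A P → Form A P

namespace Form
variable {A P : Type}
/-- Material implication, defined from ¬ and ∧. -/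
def imp (φ ψ : Form A P) : Form A P := neg (and φ (neg ψ))
/-- Biconditional. -/
def iff (φ ψ : Form A P) : Form A P := and (imp φ ψ) (imp ψ φ)
/-- Falsum. -/
def bot : Form A P := neg top
end Form

/-- A boolean interpretation of formulas: any assignment of truth values to formulas
that respects ⊤, ¬ and ∧ (treating atoms and modal formulas as atomic). -/
def PropEval {A P : Type} (g : Form A P → Prop) : Prop :=
  g Form.top ∧ (∀ φ : Form A P, g (Form.neg φ) ↔ ¬ g φ) ∧
    (∀ φ ψ : Form A P, g (Form.and φ ψ) ↔ (g φ ∧ g ψ))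

/-- The Hilbert system SSL: all instances of propositional tautologies, the S5 axioms
(K), (T), (4), (5) for each K_a, the secrecy axioms (S1) S_aφ → K_aφ,
(S2) S_aφ → ¬K_bφ for b ≠ a, (S4) S_aφ → K_aS_aφ, with rules modus ponens,
knowledge necessitation, and replacement of provable equivalents under S_a. -/
inductive Prov {A P : Type} : Form A P → Prop
  | taut (φ : Form A P) :
      (∀ g : Form A P → Prop, PropEval g → g φ) → Prov φ
  | axK (a : A) (φ ψ : Form A P) :
      Prov ((Form.K a (φ.imp ψ)).imp ((Form.K a φ).imp (Form.K a ψ)))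
  | axT (a : A) (φ : Form A P) : Prov ((Form.K a φ).imp φ)
  | ax4 (a : A) (φ : Form A P) : Prov ((Form.K a φ).imp (Form.K a (Form.K a φ)))
  | ax5 (a : A) (φ : Form A P) :
      Prov ((Form.neg (Form.K a φ)).imp (Form.K a (Form.neg (Form.K a φ))))
  | axS1 (a : A) (φ : Form A P) : Prov ((Form.S a φ).imp (Form.K a φ))
  | axS2 {a b : A} (φ : Form A P) :
      b ≠ a → Prov ((Form.S a φ).imp (Form.neg (Form.K b φ)))
  | axS4 (a : A) (φ : Form A P) : Prov ((Form.S a φ).imp (Form.K a (Form.S a φ)))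
  | mp {φ ψ : Form A P} : Prov (φ.imp ψ) → Prov φ → Prov ψ
  | nec (a : A) {φ : Form A P} : Prov φ → Prov (Form.K a φ)
  | re (a : A) {φ ψ : Form A P} :
      Prov (φ.iff ψ) → Prov ((Form.S a φ).iff (Form.S a ψ))

namespace Prov

variable {A P : Type}

theorem imp_trans {φ ψ χ : Form A P} (hφψ : Prov (φ.imp ψ)) (hψχ : Prov (ψ.imp χ)) :
    Prov (φ.imp χ) := by
  have hsyll : Prov ((φ.imp ψ).imp ((ψ.imp χ).imp (φ.imp χ))) := by
    refine taut _ fun g ⟨_, hneg, hand⟩ => ?_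
    simp only [Form.imp, hneg, hand]
    tauto
  exact (hsyll.mp hφψ).mp hψχ

theorem contrapose {φ ψ : Form A P} (h : Prov (φ.imp ψ)) :
    Prov ((Form.neg ψ).imp (Form.neg φ)) := by
  have hcontra : Prov ((φ.imp ψ).imp ((Form.neg ψ).imp (Form.neg φ))) := by
    refine taut _ fun g ⟨_, hneg, hand⟩ => ?_
    simp only [Form.imp, hneg, hand]
    tauto
  exact hcontra.mp h

theorem K_mono (a : A) {φ ψ : Form A P} (h : Prov (φ.imp ψ)) :
    Prov ((Form.K a φ).imp (Form.K a ψ)) :=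
  (axK a φ ψ).mp (nec a h)

/-- `¬ψ → ¬K_aψ → K_a¬K_aψ → K_a¬ψ`, by (T), (5), and the contrapositive of `h` under `K_a`. -/
theorem neg_introspection_of_pos_introspection (a : A) {ψ : Form A P}
    (h : Prov (ψ.imp (Form.K a ψ))) :
    Prov ((Form.neg ψ).imp (Form.K a (Form.neg ψ))) :=
  ((axT a ψ).contrapose.imp_trans (ax5 a ψ)).imp_trans (K_mono a h.contrapose)

end Prov

/-- In SSL, `¬S_a φ → K_a ¬S_a φ` is derivable for every agent `a` and formula `φ`. -/
theorem ssl_negative_introspection_secrecy {A P : Type} (a : A) (φ : Form A P) :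
    Prov ((Form.neg (Form.S a φ)).imp (Form.K a (Form.neg (Form.S a φ)))) :=
  Prov.neg_introspection_of_pos_introspection a (Prov.axS4 a φ)
end

section
/- Local invariance of canonical secrecy formulas: if Γ and Δ are maximally SSL-consistent sets in the same R_a-equivalence class (i.e. Γ R_a Δ and Δ R_a Γ), then for every formula φ, S_aφ ∈ Γ iff S_aφ ∈ Δ. -/
/-- Conjunction of a finite list of formulas (empty conjunction is ⊤). -/
def conj {A P : Type} : List (Form A P) → Form A P
  | [] => Form.top
  | φ :: L => Form.and φ (conj L)

/-- A set of formulas is SSL-consistent if no finite conjunction of its members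
provably implies ⊥. -/
def Consistent {A P : Type} (Γ : Set (Form A P)) : Prop :=
  ∀ L : List (Form A P), (∀ φ ∈ L, φ ∈ Γ) → ¬ Prov ((conj L).imp Form.bot)

/-- A maximally SSL-consistent set: consistent, and containing every formula that can
be consistently added. -/
def MCS {A P : Type} (Γ : Set (Form A P)) : Prop :=
  Consistent Γ ∧ ∀ φ : Form A P, Consistent (insert φ Γ) → φ ∈ Γ

/-!
Axiom (S4) gives `⊢ S_a φ → K_a S_a φ`, and a maximally consistent set is closed under provable
implication, so `S_a φ ∈ Γ` forces `K_a S_a φ ∈ Γ` and hence `S_a φ ∈ Δ` whenever `Γ R_a Δ`.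
The converse is the same argument with the roles of `Γ` and `Δ` exchanged.
-/

namespace PropEval

variable {A P : Type} {g : Form A P → Prop}

theorem eval_imp (hg : PropEval g) (φ ψ : Form A P) : g (φ.imp ψ) ↔ (g φ → g ψ) := by
  obtain ⟨-, hneg, hand⟩ := hg
  simp only [Form.imp, hneg, hand]
  tauto

theorem eval_conj (hg : PropEval g) (L : List (Form A P)) : g (conj L) ↔ ∀ χ ∈ L, g χ := by
  induction L with
  | nil => simpa [conj] using hg.1
  | cons φ L ih => simp [conj, hg.2.2, ih]

end PropEval

section

variable {A P : Type}

theorem Prov.imp_trans_s18 {φ ψ χ : Form A P} (hφψ : Prov (φ.imp ψ)) (hψχ : Prov (ψ.imp χ)) :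
    Prov (φ.imp χ) := by
  have taut : Prov ((φ.imp ψ).imp ((ψ.imp χ).imp (φ.imp χ))) :=
    Prov.taut _ fun g hg => by simp only [hg.eval_imp]; tauto
  exact Prov.mp (Prov.mp taut hφψ) hψχ

/-- If `insert ψ Γ` were refuted by a list `L`, then `Γ` itself would be refuted by `φ` followed by
the members of `L` other than `ψ`, because `⊢ φ → ψ`. -/
theorem MCS.mem_of_prov_imp {Γ : Set (Form A P)} (hΓ : MCS Γ) {φ ψ : Form A P}
    (hφ : φ ∈ Γ) (hφψ : Prov (φ.imp ψ)) : ψ ∈ Γ := by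
  classical
  refine hΓ.2 ψ fun L hL hrefute => ?_
  let L' := φ :: L.filter (· ≠ ψ)
  have hL' : ∀ χ ∈ L', χ ∈ Γ := by
    simp only [L', List.mem_cons, List.mem_filter, decide_eq_true_eq]
    rintro χ (rfl | ⟨hχL, hχψ⟩)
    · exact hφ
    · exact (hL χ hχL).resolve_left hχψ
  have hweaken : Prov ((conj L').imp (conj L)) := by
    refine Prov.mp (Prov.taut ((φ.imp ψ).imp ((conj L').imp (conj L))) fun g hg => ?_) hφψ
    simp only [hg.eval_imp, hg.eval_conj, L', List.mem_cons, List.mem_filter, decide_eq_true_eq]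
    intro himp hall χ hχL
    by_cases hχψ : χ = ψ
    · exact hχψ ▸ himp (hall φ (.inl rfl))
    · exact hall χ (.inr ⟨hχL, hχψ⟩)
  exact hΓ.1 L' hL' (hweaken.imp_trans_s18 hrefute)

theorem MCS.K_S_mem_of_S_mem {Γ : Set (Form A P)} (hΓ : MCS Γ) {a : A} {φ : Form A P}
    (h : Form.S a φ ∈ Γ) : Form.K a (Form.S a φ) ∈ Γ :=
  hΓ.mem_of_prov_imp h (Prov.axS4 a φ)

end

/-- Local invariance of canonical secrecy formulas: if MCSs `Γ, Δ` lie in the same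
`R_a`-class, then `S_a φ ∈ Γ` iff `S_a φ ∈ Δ`. -/
theorem canonical_secrecy_invariance {A P : Type} (a : A) (φ : Form A P)
    (Γ Δ : Set (Form A P)) (hΓ : MCS Γ) (hΔ : MCS Δ)
    (h1 : ∀ ψ : Form A P, Form.K a ψ ∈ Γ → ψ ∈ Δ)
    (h2 : ∀ ψ : Form A P, Form.K a ψ ∈ Δ → ψ ∈ Γ) :
    (Form.S a φ ∈ Γ ↔ Form.S a φ ∈ Δ) :=
  ⟨fun h => h1 _ (hΓ.K_S_mem_of_S_mem h), fun h => h2 _ (hΔ.K_S_mem_of_S_mem h)⟩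
end
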